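/- arXiv:2602.08902 — 3 statements merged into one kernel-verified Lean document; each statement's English description precedes it below -/
import Mathlib

section
/- Let K be an algebraically closed field of characteristic 0, let m ≥ 0 and k ≥ 0 be integers, let a be an integer, and let s be a natural number with s ≤ Σ_{i=0}^{k} max(i·m+a+1, 0). Then there exist pairs (p_1,q_1), …, (p_s,q_s) with p_j, q_j ∈ K²∖{0} such that the linear map V_{k,a} → K^s sending f = (f_0,…,f_k) to (ev_{(p_j,q_j)}(f))_{j=1,…,s} is surjective. (Geometrically: s general points of the Hirzebruch surface F_m impose s independent conditions on the linear system |O_{F_m}(k,a)|.) -/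
open MvPolynomial

noncomputable section

/-- The space `V_{k,a}`: tuples `(f_0,…,f_k)` of binary forms, with `f_i`
homogeneous of degree `i*m+a`, and `f_i = 0` whenever `i*m+a < 0`. -/
def Vsub (K : Type) [Field K] (m k : ℕ) (a : ℤ) :
    Submodule K (Fin (k + 1) → MvPolynomial (Fin 2) K) :=
  ⨅ i : Fin (k + 1),
    ((homogeneousSubmodule (Fin 2) K (((i : ℕ) : ℤ) * (m : ℤ) + a).toNat ⊓
        (if (((i : ℕ) : ℤ) * (m : ℤ) + a) < 0 then
          (⊥ : Submodule K (MvPolynomial (Fin 2) K)) else ⊤)).comap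
      (LinearMap.proj i))

/-- Evaluation of `f ∈ V_{k,a}` at a point `(p,q)` of `F_m`:
`Σ f_i(p) · q_0^i · q_1^(k-i)`, as a linear functional. -/
def ptEval (K : Type) [Field K] (k : ℕ) (x : (Fin 2 → K) × (Fin 2 → K)) :
    (Fin (k + 1) → MvPolynomial (Fin 2) K) →ₗ[K] K :=
  ∑ i : Fin (k + 1),
    (x.2 0 ^ (i : ℕ) * x.2 1 ^ (k - (i : ℕ))) •
      ((aeval x.1 : MvPolynomial (Fin 2) K →ₐ[K] K).toLinearMap.comp (LinearMap.proj i))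

/-- The restriction `g_{f,h} := Σ f_i · h^(k-i)` of `F_f` to the section given by `h`. -/
def gRes (K : Type) [Field K] (k : ℕ) (h : MvPolynomial (Fin 2) K)
    (f : Fin (k + 1) → MvPolynomial (Fin 2) K) : MvPolynomial (Fin 2) K :=
  ∑ i : Fin (k + 1), f i * h ^ (k - (i : ℕ))

/-- `gRes` as a linear map in `f`. -/
def gResL (K : Type) [Field K] (k : ℕ) (h : MvPolynomial (Fin 2) K) :
    (Fin (k + 1) → MvPolynomial (Fin 2) K) →ₗ[K] MvPolynomial (Fin 2) K :=
  ∑ i : Fin (k + 1),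
    (LinearMap.mulLeft K (h ^ (k - (i : ℕ)))).comp (LinearMap.proj i)

/-- Evaluation of `g_{f,h}` at a parameter `p`, as a linear functional in `f`. -/
def gEval (K : Type) [Field K] (k : ℕ) (h : MvPolynomial (Fin 2) K) (p : Fin 2 → K) :
    (Fin (k + 1) → MvPolynomial (Fin 2) K) →ₗ[K] K :=
  ∑ i : Fin (k + 1),
    (eval p h ^ (k - (i : ℕ))) •
      ((aeval p : MvPolynomial (Fin 2) K →ₐ[K] K).toLinearMap.comp (LinearMap.proj i))

/-- `F_f := Σ f_i(t_0,t_1) · u_0^i · u_1^(k-i) ∈ K[t_0,t_1,u_0,u_1]`. -/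
def Fpoly (K : Type) [Field K] (k : ℕ) (f : Fin (k + 1) → MvPolynomial (Fin 2) K) :
    MvPolynomial (Fin 4) K :=
  ∑ i : Fin (k + 1),
    rename (Fin.castLE (by norm_num)) (f i) * X 2 ^ (i : ℕ) * X 3 ^ (k - (i : ℕ))

/-- The chart polynomial `P_f(t,u) := Σ f_j(t,1) · u^(k-j)`, in variables `t = X 0`, `u = X 1`. -/
def chartPoly (K : Type) [Field K] (k : ℕ) (f : Fin (k + 1) → MvPolynomial (Fin 2) K) :
    MvPolynomial (Fin 2) K :=
  ∑ j : Fin (k + 1), aeval ![X 0, 1] (f j) * X 1 ^ (k - (j : ℕ))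

/-- `chartPoly` as a linear map in `f`. -/
def chartPolyL (K : Type) [Field K] (k : ℕ) :
    (Fin (k + 1) → MvPolynomial (Fin 2) K) →ₗ[K] MvPolynomial (Fin 2) K :=
  ∑ j : Fin (k + 1),
    (LinearMap.mulLeft K ((X 1 : MvPolynomial (Fin 2) K) ^ (k - (j : ℕ)))).comp
      (((aeval ![X 0, 1] : MvPolynomial (Fin 2) K →ₐ[K] MvPolynomial (Fin 2) K)).toLinearMap.comp
        (LinearMap.proj j))

end

noncomputable section AuxProof

open MvPolynomial

variable {K : Type} [Field K]

lemma degree_two (f : Fin 2 →₀ ℕ) : f.degree = f 0 + f 1 := by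
  rw [Finsupp.degree, ← Fin.sum_univ_two f]
  exact Finset.sum_subset (Finset.subset_univ _) fun x _ hx => by
    simpa using Finsupp.notMem_support_iff.mp hx

lemma mu_inj {j j' d d' : ℕ}
    (h : Finsupp.single (0 : Fin 2) j + Finsupp.single 1 d =
      Finsupp.single (0 : Fin 2) j' + Finsupp.single 1 d') : j = j' := by
  have := DFunLike.congr_fun h 0
  simpa using this

lemma aeval_eq_eval' (p : Fin 2 → K) (g : MvPolynomial (Fin 2) K) :
    aeval p g = eval p g := rfl

lemma existsA [Infinite K] (P : MvPolynomial (Fin 2) K) (hP : P ≠ 0) :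
    ∃ p : Fin 2 → K, p ≠ 0 ∧ eval p P ≠ 0 := by
  have h1 : P * X 0 ≠ 0 := mul_ne_zero hP (X_ne_zero 0)
  have hex : ∃ p, eval p (P * X 0) ≠ 0 := by
    by_contra h
    push_neg at h
    exact h1 (MvPolynomial.funext fun x => by simpa using h x)
  obtain ⟨p, hp⟩ := hex
  rw [map_mul, eval_X] at hp
  refine ⟨p, fun h0 => hp ?_, fun h => hp (by rw [h, zero_mul])⟩
  rw [h0]
  simp

lemma existsB [Infinite K] (k : ℕ) (f : Fin (k + 1) → MvPolynomial (Fin 2) K) (hf : f ≠ 0) :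
    ∃ x : (Fin 2 → K) × (Fin 2 → K), x.1 ≠ 0 ∧ x.2 ≠ 0 ∧ ptEval K k x f ≠ 0 := by
  obtain ⟨i0, hi0⟩ : ∃ i, f i ≠ 0 := by
    by_contra h; push_neg at h; exact hf (funext h)
  obtain ⟨p, hp0, hpe⟩ := existsA (f i0) hi0
  set Q : MvPolynomial (Fin 2) K :=
    ∑ i : Fin (k + 1),
      monomial (Finsupp.single 0 (i : ℕ) + Finsupp.single 1 (k - (i : ℕ))) (eval p (f i))
    with hQ
  have hQne : Q ≠ 0 := by
    intro h
    have hco : coeff (Finsupp.single 0 (i0 : ℕ) + Finsupp.single 1 (k - (i0 : ℕ))) Q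
        = eval p (f i0) := by
      rw [hQ, coeff_sum, Finset.sum_eq_single i0]
      · rw [coeff_monomial, if_pos rfl]
      · intro b _ hb
        rw [coeff_monomial, if_neg fun hc => hb (Fin.val_injective (mu_inj hc))]
      · intro hmem; exact absurd (Finset.mem_univ i0) hmem
    rw [h, coeff_zero] at hco
    exact hpe hco.symm
  obtain ⟨q, hq0, hqe⟩ := existsA Q hQne
  refine ⟨(p, q), hp0, hq0, ?_⟩
  have heval : eval q Q = ptEval K k (p, q) f := by
    rw [hQ, map_sum, ptEval]
    simp only [LinearMap.sum_apply, LinearMap.smul_apply, LinearMap.coe_comp,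
      Function.comp_apply, LinearMap.proj_apply, AlgHom.toLinearMap_apply, smul_eq_mul]
    refine Finset.sum_congr rfl fun i _ => ?_
    rw [eval_monomial, aeval_eq_eval', Finsupp.prod_pow, Fin.prod_univ_two]
    have h0 : ((Finsupp.single (0 : Fin 2) (i : ℕ) + Finsupp.single 1 (k - (i : ℕ)) : Fin 2 →₀ ℕ) 0)
        = (i : ℕ) := by simp
    have h1 : ((Finsupp.single (0 : Fin 2) (i : ℕ) + Finsupp.single 1 (k - (i : ℕ)) : Fin 2 →₀ ℕ) 1)
        = k - (i : ℕ) := by simp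
    rw [h0, h1]
    ring
  rw [← heval]
  exact hqe

/-- Index type for the monomial basis of `V_{k,a}`. -/
abbrev idx (m k : ℕ) (a : ℤ) : Type :=
  Σ i : Fin (k + 1), Fin ((((i : ℕ) : ℤ) * (m : ℤ) + a + 1).toNat)

variable (K)

/-- The linear map sending a coefficient vector to the corresponding element of `V_{k,a}`. -/
def Lraw (m k : ℕ) (a : ℤ) :
    (idx m k a → K) →ₗ[K] (Fin (k + 1) → MvPolynomial (Fin 2) K) :=
  LinearMap.pi fun i =>
    ∑ j : Fin ((((i : ℕ) : ℤ) * (m : ℤ) + a + 1).toNat),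
      (LinearMap.proj (⟨i, j⟩ : idx m k a)).smulRight
        (monomial (Finsupp.single 0 (j : ℕ) +
          Finsupp.single 1 ((((i : ℕ) : ℤ) * (m : ℤ) + a).toNat - (j : ℕ))) 1)

lemma Lraw_apply (m k : ℕ) (a : ℤ) (c : idx m k a → K) (i : Fin (k + 1)) :
    Lraw K m k a c i =
      ∑ j : Fin ((((i : ℕ) : ℤ) * (m : ℤ) + a + 1).toNat),
        c ⟨i, j⟩ • monomial (Finsupp.single 0 (j : ℕ) +
          Finsupp.single 1 ((((i : ℕ) : ℤ) * (m : ℤ) + a).toNat - (j : ℕ))) 1 := by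
  simp [Lraw, LinearMap.pi_apply, LinearMap.sum_apply, LinearMap.smulRight_apply]

lemma Lraw_coeff (m k : ℕ) (a : ℤ) (c : idx m k a → K) (i : Fin (k + 1))
    (j : Fin ((((i : ℕ) : ℤ) * (m : ℤ) + a + 1).toNat)) :
    coeff (Finsupp.single 0 (j : ℕ) +
        Finsupp.single 1 ((((i : ℕ) : ℤ) * (m : ℤ) + a).toNat - (j : ℕ)))
      (Lraw K m k a c i) = c ⟨i, j⟩ := by
    rw [Lraw_apply, coeff_sum, Finset.sum_eq_single j]
    · rw [coeff_smul, coeff_monomial, if_pos rfl, smul_eq_mul, mul_one]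
    · intro b _ hb
      rw [coeff_smul, coeff_monomial, if_neg fun hc => hb (Fin.val_injective (mu_inj hc)),
        smul_eq_mul, mul_zero]
    · intro hmem; exact absurd (Finset.mem_univ j) hmem

lemma Lraw_inj (m k : ℕ) (a : ℤ) : Function.Injective (Lraw K m k a) := by
  rw [← LinearMap.ker_eq_bot, LinearMap.ker_eq_bot']
  intro c hc
  funext x
  obtain ⟨i, j⟩ := x
  have h1 : Lraw K m k a c i = 0 := congrFun hc i
  have h2 := Lraw_coeff K m k a c i j
  rw [h1, coeff_zero] at h2
  exact h2.symm

lemma Lraw_mem (m k : ℕ) (a : ℤ) (c : idx m k a → K) : Lraw K m k a c ∈ Vsub K m k a := by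
  rw [Vsub, Submodule.mem_iInf]
  intro i
  rw [Submodule.mem_comap]
  have hproj : (LinearMap.proj i : (Fin (k+1) → MvPolynomial (Fin 2) K) →ₗ[K] _)
      (Lraw K m k a c) = Lraw K m k a c i := rfl
  rw [hproj]
  by_cases hneg : (((i : ℕ) : ℤ) * (m : ℤ) + a) < 0
  · have hn : ((((i : ℕ) : ℤ) * (m : ℤ) + a + 1).toNat) = 0 := by omega
    haveI : IsEmpty (Fin ((((i : ℕ) : ℤ) * (m : ℤ) + a + 1).toNat)) := by
      rw [hn]; infer_instance
    have hz : Lraw K m k a c i = 0 := by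
      rw [Lraw_apply, Finset.univ_eq_empty, Finset.sum_empty]
    rw [hz]
    exact Submodule.zero_mem _
  · rw [if_neg hneg]
    refine Submodule.mem_inf.mpr ⟨?_, trivial⟩
    rw [Lraw_apply]
    refine Submodule.sum_mem _ fun j _ => Submodule.smul_mem _ _ ?_
    rw [mem_homogeneousSubmodule]
    refine isHomogeneous_monomial _ ?_
    rw [degree_two]
    have hj : (j : ℕ) < ((((i : ℕ) : ℤ) * (m : ℤ) + a + 1).toNat) := j.isLt
    simp only [Finsupp.add_apply, Finsupp.single_eq_same,
      Finsupp.single_apply]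
    norm_num
    omega

lemma greedy {V : Type} [AddCommGroup V] [Module K V] [FiniteDimensional K V]
    {PT : Type} (good : PT → Prop) (ev : PT → (V →ₗ[K] K))
    (hstep : ∀ v : V, v ≠ 0 → ∃ x : PT, good x ∧ ev x v ≠ 0) :
    ∀ s : ℕ, s ≤ Module.finrank K V →
      ∃ x : Fin s → PT, (∀ j, good (x j)) ∧
        Function.Surjective (LinearMap.pi fun j : Fin s => ev (x j)) := by
  intro s
  induction s with
  | zero =>
    intro _
    exact ⟨Fin.elim0, fun j => j.elim0, fun w => ⟨0, funext fun j => j.elim0⟩⟩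
  | succ s ih =>
    intro hs
    obtain ⟨x, hgood, hsurj⟩ := ih (by omega)
    set A := LinearMap.pi fun j : Fin s => ev (x j) with hA
    have hker : LinearMap.ker A ≠ ⊥ := by
      intro h
      have hinj := LinearMap.ker_eq_bot.mp h
      have hle := LinearMap.finrank_le_finrank_of_injective hinj
      rw [Module.finrank_fintype_fun_eq_card, Fintype.card_fin] at hle
      omega
    obtain ⟨v, hv, hvne⟩ := Submodule.exists_mem_ne_zero_of_ne_bot hker
    obtain ⟨y, hygood, hyev⟩ := hstep v hvne
    have hvj : ∀ j : Fin s, ev (x j) v = 0 := by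
      intro j
      have hAv : A v = 0 := LinearMap.mem_ker.mp hv
      have := congrFun hAv j
      simpa [hA] using this
    refine ⟨Fin.snoc x y, ?_, ?_⟩
    · intro j
      refine Fin.lastCases ?_ (fun j' => ?_) j
      · simpa using hygood
      · simpa using hgood j'
    · intro w
      obtain ⟨c1, hc1⟩ := hsurj fun j => w j.castSucc
      set t := (w (Fin.last s) - ev y c1) / ev y v with ht
      refine ⟨c1 + t • v, funext fun j => ?_⟩
      refine Fin.lastCases ?_ (fun j' => ?_) j
      · simp only [LinearMap.pi_apply, Fin.snoc_last, map_add, map_smul, smul_eq_mul, ht]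
        rw [div_mul_cancel₀ _ hyev]
        ring
      · have h5 : (ev (x j')) c1 = w j'.castSucc := by
          have := congrFun hc1 j'
          simpa [hA] using this
        simp only [LinearMap.pi_apply, Fin.snoc_castSucc, map_add, map_smul, smul_eq_mul,
          hvj j', mul_zero, add_zero, h5]

end AuxProof

open MvPolynomial in
/-- s general points of the Hirzebruch surface F_m impose s independent
conditions on |O(k,a)|, provided s ≤ dim V_{k,a} = Σ_{i=0}^k max(i·m+a+1, 0). -/
theorem statement0 (K : Type) [Field K] [IsAlgClosed K] [CharZero K]
    (m k : ℕ) (a : ℤ) (s : ℕ)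
    (hs : (s : ℤ) ≤ ∑ i ∈ Finset.range (k + 1), max ((i : ℤ) * (m : ℤ) + a + 1) 0) :
    ∃ x : Fin s → (Fin 2 → K) × (Fin 2 → K),
      (∀ j, (x j).1 ≠ 0 ∧ (x j).2 ≠ 0) ∧
      Function.Surjective
        (LinearMap.pi fun j : Fin s =>
          (ptEval K k (x j)).comp (Vsub K m k a).subtype) := by
  classical
  have hsN : s ≤ ∑ i ∈ Finset.range (k + 1), ((i : ℤ) * (m : ℤ) + a + 1).toNat := by
    have h2 : (s : ℤ) ≤
        ((∑ i ∈ Finset.range (k + 1), ((i : ℤ) * (m : ℤ) + a + 1).toNat : ℕ) : ℤ) := by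
      rw [Nat.cast_sum]
      refine hs.trans_eq (Finset.sum_congr rfl fun i _ => ?_)
      exact (Int.toNat_eq_max _).symm
    exact_mod_cast h2
  have hcard : Fintype.card (idx m k a)
      = ∑ i ∈ Finset.range (k + 1), ((i : ℤ) * (m : ℤ) + a + 1).toNat := by
    rw [Fintype.card_sigma]
    simp only [Fintype.card_fin]
    exact Fin.sum_univ_eq_sum_range (fun i => (((i : ℕ) : ℤ) * (m : ℤ) + a + 1).toNat) (k + 1)
  obtain ⟨x, hgood, hsurj⟩ := greedy K
    (fun x : (Fin 2 → K) × (Fin 2 → K) => x.1 ≠ 0 ∧ x.2 ≠ 0)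
    (fun x => (ptEval K k x).comp (Lraw K m k a))
    (fun c hc => by
      obtain ⟨x, h1, h2, h3⟩ := existsB k (Lraw K m k a c)
        (fun h => hc (Lraw_inj K m k a (by rw [h, map_zero])))
      exact ⟨x, ⟨h1, h2⟩, h3⟩)
    s (by rw [Module.finrank_fintype_fun_eq_card, hcard]; exact hsN)
  refine ⟨x, hgood, fun w => ?_⟩
  obtain ⟨c, hc⟩ := hsurj w
  exact ⟨⟨Lraw K m k a c, Lraw_mem K m k a c⟩, hc⟩
end

section
/- Let K be an algebraically closed field of characteristic 0, m ≥ 0 and k ≥ 0 integers, a an integer. Let h_0, …, h_k ∈ K[t_0,t_1] be pairwise distinct homogeneous forms of degree m, let s_0, …, s_k ≥ 0 be integers with s_i ≤ min(s_{i+1}, max(i·m+a+1, 0)) for 0 ≤ i ≤ k−1 and s_k ≤ max(k·m+a+1, 0), and let D_0, …, D_k ∈ K[t_0,t_1] be nonzero homogeneous forms with deg D_i = s_i such that for all i ≠ j the forms D_i and h_i − h_j have no common zero in K²∖{0}. Then dim_K { f ∈ V_{k,a} : D_i divides g_{f,h_i} in K[t_0,t_1] for every 0 ≤ i ≤ k }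 = dim_K V_{k,a} − Σ_{i=0}^{k} s_i. (Geometrically: effective divisors D_i of degree s_i on k+1 distinct sections of F_m → P^1, disjoint from the other sections, impose independent conditions on |O_{F_m}(k,a)|.) -/
open MvPolynomial

/-!
Restriction to the section `C_{h_i}` is a linear map `f ↦ g_{f,h_i}` from `V_{k,a}` to binary
forms of degree `d = km + a`, and binary forms of degree `d` have exactly `s_i` independent
classes modulo `D_i` as soon as `s_i ≤ d + 1`. So the claim is that the `k + 1` restriction maps
are jointly surjective modulo the `D_i`: any residues `r_i` of degree `d` are attained. This goes
by induction on `k`: writing `F_f = (u₁ - H u₀) F_g + r_k u₀^(k+1)` with `H = h_k`, the condition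
on `C_H` holds, and the others become congruences `(h_j - H) x_j ≡ r_j - r_k mod D_j` for the
residues `x_j` of `g` one degree lower. These are solvable: by the Nullstellensatz `D_j` and
`h_j - H` have no common zero, so multiplication by `h_j - H` is injective modulo `D_j`, hence
bijective between the relevant degrees by counting dimensions.
-/

namespace MvPolynomial

open Module

section CommSemiring

variable {σ R : Type*} [CommSemiring R]

instance [Finite σ] (n : ℕ) : Module.Finite R (homogeneousSubmodule σ R n) :=
  Module.Finite.iff_fg.mpr (homogeneousSubmodule_fg σ R n)

theorem IsHomogeneous.homogeneousComponent_mul {D : MvPolynomial σ R} {s : ℕ}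
    (hD : D.IsHomogeneous s) (q : MvPolynomial σ R) (n : ℕ) :
    homogeneousComponent n (D * q) = if s ≤ n then D * homogeneousComponent (n - s) q else 0 := by
  conv_lhs => rw [← sum_homogeneousComponent q, Finset.mul_sum, map_sum]
  have hterm : ∀ i, homogeneousComponent n (D * homogeneousComponent i q) =
      if i = n - s ∧ s ≤ n then D * homogeneousComponent i q else 0 := fun i => by
    rw [homogeneousComponent_of_mem (hD.mul (homogeneousComponent_isHomogeneous i q))]
    exact if_congr (by omega) rfl rfl
  simp only [hterm, ite_and]
  split_ifs with hs
  · rw [Finset.sum_ite_eq' (Finset.range (q.totalDegree + 1))]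
    split_ifs with hmem
    · rfl
    · rw [homogeneousComponent_eq_zero _ _ (by simp at hmem; omega), mul_zero]
  · simp

theorem IsHomogeneous.exists_eq_mul_of_dvd {D g : MvPolynomial σ R} {s n : ℕ}
    (hD : D.IsHomogeneous s) (hg : g.IsHomogeneous n) (hdvd : D ∣ g) (hsn : s ≤ n) :
    ∃ q : MvPolynomial σ R, q.IsHomogeneous (n - s) ∧ g = D * q := by
  obtain ⟨q, rfl⟩ := hdvd
  refine ⟨homogeneousComponent (n - s) q, homogeneousComponent_isHomogeneous _ _, ?_⟩
  have h := hD.homogeneousComponent_mul q n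
  rwa [if_pos hsn, homogeneousComponent_of_mem hg, if_pos rfl] at h

theorem IsHomogeneous.eq_zero_of_dvd_of_lt {D g : MvPolynomial σ R} {s n : ℕ}
    (hD : D.IsHomogeneous s) (hg : g.IsHomogeneous n) (hdvd : D ∣ g) (hns : n < s) : g = 0 := by
  obtain ⟨q, rfl⟩ := hdvd
  have h := hD.homogeneousComponent_mul q n
  rwa [if_neg hns.not_ge, homogeneousComponent_of_mem hg, if_pos rfl] at h

theorem homogeneousSubmodule_inf_span_singleton {D : MvPolynomial σ R} {s n : ℕ}
    (hD : D.IsHomogeneous s) (hsn : s ≤ n) :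
    homogeneousSubmodule σ R n ⊓ (Ideal.span {D}).restrictScalars R =
      (homogeneousSubmodule σ R (n - s)).map (LinearMap.mulLeft R D) := by
  ext g
  simp only [Submodule.mem_inf, mem_homogeneousSubmodule, Submodule.restrictScalars_mem,
    Ideal.mem_span_singleton, Submodule.mem_map, LinearMap.mulLeft_apply]
  constructor
  · rintro ⟨hg, hdvd⟩
    obtain ⟨q, hq, rfl⟩ := hD.exists_eq_mul_of_dvd hg hdvd hsn
    exact ⟨q, hq, rfl⟩
  · rintro ⟨q, hq, rfl⟩
    exact ⟨by simpa [Nat.add_sub_cancel' hsn] using hD.mul hq, dvd_mul_right D q⟩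

theorem homogeneousSubmodule_inf_span_singleton_of_lt {D : MvPolynomial σ R} {s n : ℕ}
    (hD : D.IsHomogeneous s) (hns : n < s) :
    homogeneousSubmodule σ R n ⊓ (Ideal.span {D}).restrictScalars R = ⊥ := by
  refine eq_bot_iff.mpr fun g ⟨hg, hdvd⟩ => ?_
  exact hD.eq_zero_of_dvd_of_lt hg (Ideal.mem_span_singleton.mp hdvd) hns

noncomputable def formSpace (σ R : Type*) [CommSemiring R] (n : ℤ) :
    Submodule R (MvPolynomial σ R) :=
  homogeneousSubmodule σ R n.toNat ⊓ (if n < 0 then ⊥ else ⊤)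

theorem formSpace_of_neg {n : ℤ} (hn : n < 0) : formSpace σ R n = ⊥ := by
  simp [formSpace, hn]

theorem formSpace_of_nonneg {n : ℤ} (hn : 0 ≤ n) :
    formSpace σ R n = homogeneousSubmodule σ R n.toNat := by
  simp [formSpace, not_lt.mpr hn]

theorem mul_mem_formSpace {p x : MvPolynomial σ R} {e : ℕ} {n : ℤ} (hp : p.IsHomogeneous e)
    (hx : x ∈ formSpace σ R n) : p * x ∈ formSpace σ R (n + e) := by
  rcases lt_or_ge n 0 with hn | hn
  · rw [formSpace_of_neg hn, Submodule.mem_bot] at hx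
    rw [hx, mul_zero]
    exact zero_mem _
  · rw [formSpace_of_nonneg hn] at hx
    rw [formSpace_of_nonneg (by omega), mem_homogeneousSubmodule]
    convert hp.mul hx using 1
    omega

end CommSemiring

section Field

variable {σ K : Type*} [Field K]

theorem IsHomogeneous.isUnit_of_ne_zero {D : MvPolynomial σ K}
    (hD : D.IsHomogeneous 0) (hD0 : D ≠ 0) : IsUnit D := by
  have hC := totalDegree_eq_zero_iff_eq_C.mp ((totalDegree_zero_iff_isHomogeneous σ).mpr hD)
  rw [hC] at hD0 ⊢
  exact (isUnit_iff_ne_zero.mpr fun h => hD0 (by rw [h, map_zero])).map C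

instance [Finite σ] (n : ℤ) : FiniteDimensional K (formSpace σ K n) :=
  Submodule.finiteDimensional_of_le inf_le_left

noncomputable def degreeEqEquivFin (n : ℕ) : {d : Fin 2 →₀ ℕ | d.degree = n} ≃ Fin (n + 1) where
  toFun d := ⟨d.1 0, by
    have := d.2
    simp only [Set.mem_ofPred_eq, Finsupp.degree_eq_sum, Fin.sum_univ_two] at this
    omega⟩
  invFun j := ⟨Finsupp.single 0 (j : ℕ) + Finsupp.single 1 (n - (j : ℕ)), by
    simp only [Set.mem_ofPred_eq, Finsupp.degree_eq_sum, Fin.sum_univ_two]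
    simp
    omega⟩
  left_inv d := by
    have hd := d.2
    simp only [Set.mem_ofPred_eq, Finsupp.degree_eq_sum, Fin.sum_univ_two] at hd
    ext i
    fin_cases i
    · simp
    · simp; omega
  right_inv j := by
    ext
    simp

theorem finrank_homogeneousSubmodule_fin_two (n : ℕ) :
    finrank K (homogeneousSubmodule (Fin 2) K n) = n + 1 := by
  have : Fintype {d : Fin 2 →₀ ℕ | d.degree = n} := .ofEquiv _ (degreeEqEquivFin n).symm
  have e := (LinearEquiv.ofEq _ _ (homogeneousSubmodule_eq_finsupp_supported (Fin 2) K n)).trans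
    ((AddMonoidAlgebra.supportedEquivFinsupp _).trans (Finsupp.linearEquivFunOnFinite K K _))
  rw [e.finrank_eq, Module.finrank_fintype_fun_eq_card, Fintype.card_congr (degreeEqEquivFin n),
    Fintype.card_fin]

theorem exists_X_pow_mem_span_pair [IsAlgClosed K] {D E : MvPolynomial (Fin 2) K}
    (hDE : ∀ p : Fin 2 → K, p ≠ 0 → eval p D = 0 → eval p E ≠ 0) (i : Fin 2) :
    ∃ N : ℕ, (X i : MvPolynomial (Fin 2) K) ^ N ∈ Ideal.span {D, E} := by
  rw [← Ideal.mem_radical_iff, ← vanishingIdeal_zeroLocus_eq_radical (K := K)]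
  intro p hp
  have hp0 : p = 0 := by
    by_contra hne
    exact hDE p hne (hp D (Ideal.subset_span (by simp))) (hp E (Ideal.subset_span (by simp)))
  simp [hp0]

theorem dvd_of_dvd_mul_left_of_no_common_zero [IsAlgClosed K] {D E x : MvPolynomial (Fin 2) K}
    (hDE : ∀ p : Fin 2 → K, p ≠ 0 → eval p D = 0 → eval p E ≠ 0) (hdvd : D ∣ E * x) : D ∣ x := by
  have dvd_mul_of_mem : ∀ L ∈ Ideal.span {D, E}, D ∣ x * L := by
    intro L hL
    obtain ⟨α, β, rfl⟩ := Ideal.mem_span_pair.mp hL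
    rw [mul_add, mul_left_comm, mul_left_comm x β, mul_comm x E]
    exact dvd_add (dvd_mul_of_dvd_right (dvd_mul_left D x) _) (dvd_mul_of_dvd_right hdvd _)
  obtain ⟨N₀, hN₀⟩ := exists_X_pow_mem_span_pair hDE 0
  obtain ⟨N₁, hN₁⟩ := exists_X_pow_mem_span_pair hDE 1
  let := UniqueFactorizationMonoid.toGCDMonoid (MvPolynomial (Fin 2) K)
  have hX : IsRelPrime (X 0 : MvPolynomial (Fin 2) K) (X 1) :=
    X_prime.irreducible.isRelPrime_iff_not_dvd.mpr fun h => absurd (X_dvd_X.mp h) (by decide)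
  have hgcd : IsUnit (gcd ((X 0 : MvPolynomial (Fin 2) K) ^ N₀) (X 1 ^ N₁)) :=
    gcd_isUnit_iff_isRelPrime.mpr hX.pow
  rw [← hgcd.dvd_mul_right]
  exact (dvd_gcd (dvd_mul_of_mem _ hN₀) (dvd_mul_of_mem _ hN₁)).trans (gcd_mul_left' x _ _).dvd

theorem finrank_map_mkQ_homogeneousSubmodule {D : MvPolynomial (Fin 2) K} {s n : ℕ} (hD0 : D ≠ 0)
    (hD : D.IsHomogeneous s) (hs : s ≤ n + 1) :
    finrank K ((homogeneousSubmodule (Fin 2) K n).map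
      ((Ideal.span {D}).restrictScalars K).mkQ) = s := by
  set H := homogeneousSubmodule (Fin 2) K n
  set π := ((Ideal.span {D}).restrictScalars K).mkQ
  have rank_nullity := (π.domRestrict H).finrank_range_add_finrank_ker
  rw [LinearMap.range_domRestrict, finrank_homogeneousSubmodule_fin_two,
    ← Submodule.finrank_map_subtype_eq, LinearMap.ker_domRestrict, Submodule.map_comap_subtype,
    Submodule.ker_mkQ] at rank_nullity
  rcases Nat.lt_or_ge n s with hns | hsn
  · rw [homogeneousSubmodule_inf_span_singleton_of_lt hD hns, finrank_bot] at rank_nullity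
    omega
  · rw [homogeneousSubmodule_inf_span_singleton hD hsn,
      ← (Submodule.equivMapOfInjective (LinearMap.mulLeft K D) (mul_right_injective₀ hD0)
        _).finrank_eq,
      finrank_homogeneousSubmodule_fin_two] at rank_nullity
    omega

theorem exists_isHomogeneous_dvd_mul_sub [IsAlgClosed K] {D E c : MvPolynomial (Fin 2) K}
    {s e n : ℕ} (hD0 : D ≠ 0) (hD : D.IsHomogeneous s) (hE : E.IsHomogeneous e)
    (hDE : ∀ p : Fin 2 → K, p ≠ 0 → eval p D = 0 → eval p E ≠ 0) (hs : s ≤ n + 1)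
    (hc : c.IsHomogeneous (n + e)) :
    ∃ x : MvPolynomial (Fin 2) K, x.IsHomogeneous n ∧ D ∣ E * x - c := by
  set I := (Ideal.span {D}).restrictScalars K
  set Q : ℕ → Submodule K (MvPolynomial (Fin 2) K ⧸ I) :=
    fun d => (homogeneousSubmodule (Fin 2) K d).map I.mkQ
  have hmem_I : ∀ y, y ∈ I ↔ D ∣ y := fun y => Ideal.mem_span_singleton
  let mulE := I.mapQ I (LinearMap.mulLeft K E) fun y hy => by
    simpa [hmem_I] using ((hmem_I y).mp hy).mul_left E
  have mulE_injective : Function.Injective mulE := by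
    refine (injective_iff_map_eq_zero mulE).mpr fun y hy => ?_
    induction y using Submodule.Quotient.induction_on with | _ y => ?_
    rw [Submodule.mapQ_apply, Submodule.Quotient.mk_eq_zero, hmem_I] at hy
    rw [Submodule.Quotient.mk_eq_zero, hmem_I]
    exact dvd_of_dvd_mul_left_of_no_common_zero hDE hy
  have hle : (Q n).map mulE ≤ Q (n + e) := by
    rintro _ ⟨_, ⟨x, hx, rfl⟩, rfl⟩
    exact ⟨E * x, by simpa [add_comm] using hE.mul hx, rfl⟩
  have heq : (Q n).map mulE = Q (n + e) := by
    refine Submodule.eq_of_le_of_finrank_le hle ?_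
    rw [← (Submodule.equivMapOfInjective _ mulE_injective _).finrank_eq,
      finrank_map_mkQ_homogeneousSubmodule hD0 hD hs,
      finrank_map_mkQ_homogeneousSubmodule hD0 hD (by omega)]
  obtain ⟨_, ⟨x, hx, rfl⟩, hxc⟩ := heq.ge ⟨c, hc, rfl⟩
  refine ⟨x, hx, ?_⟩
  rw [← hmem_I, ← Submodule.Quotient.eq]
  exact hxc

theorem finrank_map_mkQ_formSpace {D : MvPolynomial (Fin 2) K} {s : ℕ} {n : ℤ} (hD0 : D ≠ 0)
    (hD : D.IsHomogeneous s) (hs : (s : ℤ) ≤ max (n + 1) 0) :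
    finrank K ((formSpace (Fin 2) K n).map ((Ideal.span {D}).restrictScalars K).mkQ) = s := by
  rcases lt_or_ge n 0 with hn | hn
  · rw [formSpace_of_neg hn, Submodule.map_bot, finrank_bot]
    omega
  · rw [formSpace_of_nonneg hn]
    exact finrank_map_mkQ_homogeneousSubmodule hD0 hD (by omega)

theorem exists_mem_formSpace_dvd_mul_sub [IsAlgClosed K] {D E c : MvPolynomial (Fin 2) K}
    {s e : ℕ} {n : ℤ} (hD0 : D ≠ 0) (hD : D.IsHomogeneous s) (hE : E.IsHomogeneous e)
    (hDE : ∀ p : Fin 2 → K, p ≠ 0 → eval p D = 0 → eval p E ≠ 0) (hs : (s : ℤ) ≤ max (n + 1) 0)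
    (hc : c ∈ formSpace (Fin 2) K (n + e)) :
    ∃ x ∈ formSpace (Fin 2) K n, D ∣ E * x - c := by
  rcases lt_or_ge n 0 with hn | hn
  · have hs0 : s = 0 := by omega
    subst hs0
    exact ⟨0, zero_mem _, (hD.isUnit_of_ne_zero hD0).dvd⟩
  · rw [formSpace_of_nonneg (by omega), mem_homogeneousSubmodule,
      show (n + e).toNat = n.toNat + e by omega] at hc
    obtain ⟨x, hx, hdvd⟩ := exists_isHomogeneous_dvd_mul_sub hD0 hD hE hDE (by omega) hc
    exact ⟨x, by rwa [formSpace_of_nonneg hn], hdvd⟩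

end Field

end MvPolynomial

open Module in
theorem Submodule.finrank_inf_iInf_comap_add_sum {K M N ι : Type*} [Field K] [AddCommGroup M]
    [Module K M] [AddCommGroup N] [Module K N] [Fintype ι] (V : Submodule K M)
    [FiniteDimensional K V] (φ : ι → M →ₗ[K] N) (P T : ι → Submodule K N)
    [∀ i, FiniteDimensional K (T i)] (hT : ∀ i, V.map (φ i) ≤ T i)
    (hsurj : ∀ y : ι → N, (∀ i, y i ∈ T i) → ∃ x ∈ V, ∀ i, φ i x - y i ∈ P i) :
    finrank K ↥(V ⊓ ⨅ i, (P i).comap (φ i)) + ∑ i, finrank K ((T i).map (P i).mkQ) =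
      finrank K V := by
  let Φ : V →ₗ[K] (i : ι) → (T i).map (P i).mkQ := LinearMap.pi fun i =>
    ((P i).mkQ ∘ₗ φ i ∘ₗ V.subtype).codRestrict _ fun x =>
      ⟨φ i x, hT i ⟨x, x.2, rfl⟩, rfl⟩
  have hΦ : Function.Surjective Φ := by
    intro q
    choose y hyT hy using fun i => (q i).2
    obtain ⟨x, hxV, hx⟩ := hsurj y hyT
    refine ⟨⟨x, hxV⟩, funext fun i => Subtype.ext ?_⟩
    rw [← hy i]
    exact (Submodule.Quotient.eq _).mpr (hx i)
  have hker : LinearMap.ker Φ = (⨅ i, (P i).comap (φ i)).comap V.subtype := by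
    ext x
    simp only [LinearMap.mem_ker, Submodule.mem_comap, Submodule.mem_iInf, funext_iff]
    refine forall_congr' fun i => ?_
    rw [← Submodule.Quotient.mk_eq_zero (P i)]
    exact Subtype.ext_iff
  have rank_nullity := Φ.finrank_range_add_finrank_ker
  rw [LinearMap.range_eq_top.mpr hΦ, finrank_top, Module.finrank_pi_fintype, hker,
    ← Submodule.finrank_map_subtype_eq, Submodule.map_comap_subtype] at rank_nullity
  rw [← rank_nullity, add_comm]

open MvPolynomial Module

/-- The coefficient tuple of `(u₁ - H u₀) · F_g + c · u₀^(k+1)`. -/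
def extendAlong {R : Type*} [CommRing R] {k : ℕ} (H : R) (g : Fin (k + 1) → R) (c : R) :
    Fin (k + 2) → R :=
  Fin.snoc g 0 - Fin.cons 0 (H • g) + Pi.single (Fin.last (k + 1)) c

section Sections

variable {K : Type} [Field K] {m k : ℕ} {a : ℤ}

theorem mem_Vsub_iff {f : Fin (k + 1) → MvPolynomial (Fin 2) K} :
    f ∈ Vsub K m k a ↔ ∀ i : Fin (k + 1), f i ∈ formSpace (Fin 2) K ((i : ℕ) * m + a) := by
  simp only [Vsub, Submodule.mem_iInf, Submodule.mem_comap, LinearMap.proj_apply]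
  rfl

instance : FiniteDimensional K (Vsub K m k a) := by
  rw [Vsub, Submodule.iInf_comap_proj, ← Submodule.iSup_map_single]
  exact Submodule.finiteDimensional_iSup _

theorem gResL_apply (h : MvPolynomial (Fin 2) K) (f : Fin (k + 1) → MvPolynomial (Fin 2) K) :
    gResL K k h f = ∑ i : Fin (k + 1), h ^ (k - i) * f i := by
  simp [gResL]

theorem gResL_mem_formSpace {h : MvPolynomial (Fin 2) K} (hh : h.IsHomogeneous m)
    {f : Fin (k + 1) → MvPolynomial (Fin 2) K} (hf : f ∈ Vsub K m k a) :
    gResL K k h f ∈ formSpace (Fin 2) K (k * m + a) := by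
  rw [gResL_apply]
  refine Submodule.sum_mem _ fun i _ => ?_
  convert mul_mem_formSpace (hh.pow (k - i)) (mem_Vsub_iff.mp hf i) using 2
  push_cast [Nat.cast_sub (Nat.lt_succ_iff.mp i.isLt)]
  ring

theorem gResL_extendAlong (p H : MvPolynomial (Fin 2) K) (g : Fin (k + 1) → MvPolynomial (Fin 2) K)
    (c : MvPolynomial (Fin 2) K) :
    gResL K (k + 1) p (extendAlong H g c) = (p - H) * gResL K k p g + c := by
  have snoc_zero : gResL K (k + 1) p (Fin.snoc g 0) = p * gResL K k p g := by
    simp only [gResL_apply, Fin.sum_univ_castSucc (n := k + 1), Fin.snoc_castSucc, Fin.snoc_last,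
      mul_zero, add_zero, Finset.mul_sum, Fin.val_castSucc]
    refine Finset.sum_congr rfl fun j _ => ?_
    rw [Nat.sub_add_comm (Nat.lt_succ_iff.mp j.isLt), pow_succ]
    ring
  have cons_zero : gResL K (k + 1) p (Fin.cons 0 (H • g)) = H * gResL K k p g := by
    simp only [gResL_apply, Fin.sum_univ_succ (n := k + 1), Fin.cons_zero, Fin.cons_succ,
      mul_zero, zero_add, Fin.val_succ, Nat.add_sub_add_right, Pi.smul_apply, smul_eq_mul,
      Finset.mul_sum]
    exact Finset.sum_congr rfl fun j _ => by ring
  have single_last : gResL K (k + 1) p (Pi.single (Fin.last (k + 1)) c) = c := by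
    simp [gResL_apply, Pi.single_apply]
  rw [extendAlong, map_add, map_sub, snoc_zero, cons_zero, single_last, sub_mul]

theorem extendAlong_mem_Vsub {H : MvPolynomial (Fin 2) K} (hH : H.IsHomogeneous m)
    {g : Fin (k + 1) → MvPolynomial (Fin 2) K} (hg : g ∈ Vsub K m k a) {c : MvPolynomial (Fin 2) K}
    (hc : c ∈ formSpace (Fin 2) K ((k + 1 : ℕ) * m + a)) :
    extendAlong H g c ∈ Vsub K m (k + 1) a := by
  refine add_mem (sub_mem ?_ ?_) ?_ <;> rw [mem_Vsub_iff] <;> intro i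
  · refine Fin.lastCases ?_ (fun j => ?_) i
    · simp
    · simpa using mem_Vsub_iff.mp hg j
  · refine Fin.cases ?_ (fun j => ?_) i
    · simp
    · rw [Fin.cons_succ, Pi.smul_apply, smul_eq_mul, Fin.val_succ]
      convert mul_mem_formSpace hH (mem_Vsub_iff.mp hg j) using 2
      push_cast
      ring
  · rcases eq_or_ne i (Fin.last (k + 1)) with rfl | hi
    · simpa using hc
    · simp [hi]

end Sections

theorem Int.le_max_mul_add_of_le {s i k m : ℕ} {a : ℤ} (hik : i ≤ k)
    (hs : (s : ℤ) ≤ max (i * m + a + 1) 0) : (s : ℤ) ≤ max (k * m + a + 1) 0 := by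
  have : (i : ℤ) * m ≤ k * m := by gcongr
  omega

theorem exists_mem_Vsub_dvd_gResL_sub {K : Type} [Field K] [IsAlgClosed K] {m : ℕ} {a : ℤ} {k : ℕ}
    {h : Fin (k + 1) → MvPolynomial (Fin 2) K} (hdeg : ∀ i, (h i).IsHomogeneous m)
    {s : Fin (k + 1) → ℕ} (hbound : ∀ i : Fin (k + 1), (s i : ℤ) ≤ max ((i : ℕ) * m + a + 1) 0)
    {D : Fin (k + 1) → MvPolynomial (Fin 2) K} (hD0 : ∀ i, D i ≠ 0)
    (hDdeg : ∀ i, (D i).IsHomogeneous (s i))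
    (hcop : ∀ i j, i ≠ j → ∀ p : Fin 2 → K, p ≠ 0 → eval p (D i) = 0 → eval p (h i - h j) ≠ 0)
    (r : Fin (k + 1) → MvPolynomial (Fin 2) K) (hr : ∀ i, r i ∈ formSpace (Fin 2) K (k * m + a)) :
    ∃ f ∈ Vsub K m k a, ∀ i, D i ∣ gResL K k (h i) f - r i := by
  induction k with
  | zero =>
    refine ⟨r, mem_Vsub_iff.mpr fun i => by simpa using hr i, fun i => ?_⟩
    simp [gResL_apply, Fin.fin_one_eq_zero i]
  | succ k ih =>
    set H := h (Fin.last (k + 1))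
    have targets (j : Fin (k + 1)) : ∃ x ∈ formSpace (Fin 2) K (k * m + a),
        D j.castSucc ∣ (h j.castSucc - H) * x - (r j.castSucc - r (Fin.last (k + 1))) := by
      refine exists_mem_formSpace_dvd_mul_sub (hD0 _) (hDdeg _) ((hdeg _).sub (hdeg _))
        (hcop _ _ (Fin.castSucc_lt_last j).ne)
        (Int.le_max_mul_add_of_le (Nat.lt_succ_iff.mp j.isLt) (hbound j.castSucc)) ?_
      convert sub_mem (hr j.castSucc) (hr (Fin.last (k + 1))) using 2
      push_cast
      ring
    choose r' hr' hr'dvd using targets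
    obtain ⟨g, hg, hgdvd⟩ := ih (fun j => hdeg j.castSucc)
      (fun j => by simpa using hbound j.castSucc)
      (fun j => hD0 j.castSucc) (fun j => hDdeg j.castSucc)
      (fun i j hij => hcop _ _ (Fin.castSucc_injective _ |>.ne hij)) r' hr'
    refine ⟨extendAlong H g (r (Fin.last (k + 1))), extendAlong_mem_Vsub (hdeg _) hg (hr _),
      fun i => ?_⟩
    rw [gResL_extendAlong]
    induction i using Fin.lastCases with
    | last => simp [H]
    | cast j =>
      have regroup : (h j.castSucc - H) * gResL K k (h j.castSucc) g + r (Fin.last (k + 1)) -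
          r j.castSucc = (h j.castSucc - H) * (gResL K k (h j.castSucc) g - r' j) +
            ((h j.castSucc - H) * r' j - (r j.castSucc - r (Fin.last (k + 1)))) := by ring
      rw [regroup]
      exact dvd_add (dvd_mul_of_dvd_right (hgdvd j) _) (hr'dvd j)

theorem statement2_general (K : Type) [Field K] [IsAlgClosed K]
    (m k : ℕ) (a : ℤ)
    (h : Fin (k + 1) → MvPolynomial (Fin 2) K)
    (hdeg : ∀ i, (h i).IsHomogeneous m)
    (s : Fin (k + 1) → ℕ)
    (hbound : ∀ i : Fin (k + 1), (s i : ℤ) ≤ max (((i : ℕ) : ℤ) * (m : ℤ) + a + 1) 0)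
    (D : Fin (k + 1) → MvPolynomial (Fin 2) K)
    (hD0 : ∀ i, D i ≠ 0)
    (hDdeg : ∀ i, (D i).IsHomogeneous (s i))
    (hcop : ∀ i j, i ≠ j → ∀ p : Fin 2 → K, p ≠ 0 →
      eval p (D i) = 0 → eval p (h i - h j) ≠ 0) :
    Module.finrank K
        ↥(Vsub K m k a ⊓
          ⨅ i : Fin (k + 1),
            (Submodule.restrictScalars K (Ideal.span {D i})).comap (gResL K k (h i)))
      + ∑ i : Fin (k + 1), s i
    = Module.finrank K ↥(Vsub K m k a) := by
  have key := Submodule.finrank_inf_iInf_comap_add_sum (Vsub K m k a) (fun i => gResL K k (h i))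
    (fun i => (Ideal.span {D i}).restrictScalars K) (fun _ => formSpace (Fin 2) K (k * m + a))
    (fun i => Submodule.map_le_iff_le_comap.mpr fun _ hf => gResL_mem_formSpace (hdeg i) hf)
    fun r hr => (exists_mem_Vsub_dvd_gResL_sub hdeg hbound hD0 hDdeg hcop r hr).imp
      fun _ ⟨hf, hdvd⟩ => ⟨hf, fun i => Ideal.mem_span_singleton.mpr (hdvd i)⟩
  rwa [Finset.sum_congr rfl fun i _ => finrank_map_mkQ_formSpace (hD0 i) (hDdeg i)
    (Int.le_max_mul_add_of_le (Nat.lt_succ_iff.mp i.isLt) (hbound i))] at key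

open MvPolynomial in
/-- effective divisors D_i of degree s_i on k+1 distinct sections of
F_m → P^1, disjoint from the other sections, impose independent conditions on |O(k,a)|. -/
theorem statement2 (K : Type) [Field K] [IsAlgClosed K] [CharZero K]
    (m k : ℕ) (a : ℤ)
    (h : Fin (k + 1) → MvPolynomial (Fin 2) K)
    (hdeg : ∀ i, (h i).IsHomogeneous m)
    (hdist : ∀ i j, i ≠ j → h i ≠ h j)
    (s : Fin (k + 1) → ℕ)
    (hmono : ∀ i j : Fin (k + 1), i ≤ j → s i ≤ s j)
    (hbound : ∀ i : Fin (k + 1), (s i : ℤ) ≤ max (((i : ℕ) : ℤ) * (m : ℤ) + a + 1) 0)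
    (D : Fin (k + 1) → MvPolynomial (Fin 2) K)
    (hD0 : ∀ i, D i ≠ 0)
    (hDdeg : ∀ i, (D i).IsHomogeneous (s i))
    (hcop : ∀ i j, i ≠ j → ∀ p : Fin 2 → K, p ≠ 0 →
      eval p (D i) = 0 → eval p (h i - h j) ≠ 0) :
    Module.finrank K
        ↥(Vsub K m k a ⊓
          ⨅ i : Fin (k + 1),
            (Submodule.restrictScalars K (Ideal.span {D i})).comap (gResL K k (h i)))
      + ∑ i : Fin (k + 1), s i
    = Module.finrank K ↥(Vsub K m k a) :=
  statement2_general K m k a h hdeg s hbound D hD0 hDdeg hcop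
end

section
/- Let K be an algebraically closed field of characteristic 0, m ≥ 0 an integer, u ≥ 1, k ≥ 5, and let s_1 ≥ s_2 ≥ … ≥ s_u ≥ 1 be integers with δ := Σ_{i=1}^{u} s_i. Then for every pair of integers ℓ ≥ k and a ≥ 2·(⌈2u/k⌉+1)·s_1, there exist pairwise distinct homogeneous forms h_1, …, h_u ∈ K[t_0,t_1] of degree m and pairwise distinct scalars τ_{i,t} ∈ K (1 ≤ i ≤ u, 1 ≤ t ≤ s_i) such that the linear map V_{ℓ,a} → K^{3δ}, sending f to the collection over all (i,t) of the three values of P_f, ∂P_f/∂t and ∂P_f/∂u at the point (τ_{i,t}, h_i(τ_{i,t},1)), is surjective. (Geometrically: h^1(F_m, I_{S^{(1)}}(ℓ,a)) = 0, where S^{(1)} is the first-order thickening in F_m of the set S of the δ chosen points; i.e., being singular at the δ points of S imposes 3δ independent conditions on |O_{F_m}(ℓ,a)|.) -/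
/-!
Take the sections `h_i = c_i t₁^m`, so that the points are `(τ_p, c_i)` in the chart. If the
chart polynomial of `f` is a product `A(t) B(u)`, its value, `∂_t` and `∂_u` at `(x, y)` are
products of first-order jets of `A` at `x` and of `B` at `y`.

First put the points in a special position: the sections are grouped into blocks of
`n = (k + 1) / 2`, and the `t`-th points of all sections of one block get the same `t`-coordinate.
There are then at most `((u - 1) / n + 1) s₁` distinct `t`-coordinates and at most `n` points on
each vertical line, so Hermite interpolation in `t` (degree `≤ a`) and in `u` (degree `≤ ℓ`) gives
`3δ` products `A B` whose jet matrix is the identity. The determinant of the jet matrix is a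
polynomial in the coordinates of the points which is `1` at the special position, hence, `K`
being infinite, nonzero at some point with pairwise distinct coordinates; there the jet map is onto.
-/

open MvPolynomial

open MvPolynomial

/-- First-order evaluation data: value, d/dt, d/du. -/
noncomputable def deriv1 (K : Type) [Field K] (d : Fin 3) :
    MvPolynomial (Fin 2) K →ₗ[K] MvPolynomial (Fin 2) K :=
  if d = 0 then LinearMap.id
  else if d = 1 then (pderiv (0 : Fin 2) : Derivation K (MvPolynomial (Fin 2) K) (MvPolynomial (Fin 2) K)).toLinearMap
  else (pderiv (1 : Fin 2) : Derivation K (MvPolynomial (Fin 2) K) (MvPolynomial (Fin 2) K)).toLinearMap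

namespace Polynomial

theorem natDegree_le_of_mem_degreeLT {R : Type*} [Semiring R] {p : R[X]} {n : ℕ}
    (hp : p ∈ degreeLT R (n + 1)) : p.natDegree ≤ n := by
  rw [degreeLT_succ_eq_degreeLE, mem_degreeLE] at hp
  exact natDegree_le_iff_degree_le.2 hp

variable {K : Type*} [Field K]

theorem X_sub_C_sq_dvd_of_isRoot_derivative {p : K[X]} {y : K} (h₀ : p.IsRoot y)
    (h₁ : (derivative p).IsRoot y) : (X - C y) ^ 2 ∣ p := by
  rcases eq_or_ne p 0 with rfl | hp
  · exact dvd_zero _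
  exact (le_rootMultiplicity_iff hp).1 ((one_lt_rootMultiplicity_iff_isRoot hp).2 ⟨h₀, h₁⟩)

theorem eq_zero_of_forall_isRoot_derivative {p : K[X]} {S : Finset K}
    (hp : p ∈ degreeLT K (2 * S.card)) (h : ∀ y ∈ S, p.IsRoot y ∧ (derivative p).IsRoot y) :
    p = 0 := by
  have hdvd : ∏ y ∈ S, (X - C y) ^ 2 ∣ p :=
    Finset.prod_dvd_of_coprime
      (fun y _ z _ hyz => ((pairwise_coprime_X_sub_C Function.injective_id) hyz).pow)
      fun y hy => X_sub_C_sq_dvd_of_isRoot_derivative (h y hy).1 (h y hy).2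
  refine eq_zero_of_dvd_of_degree_lt hdvd ?_
  rw [mem_degreeLT] at hp
  simpa [degree_prod, mul_comm] using hp

noncomputable def hermiteJets (S : Finset K) : degreeLT K (2 * S.card) →ₗ[K] (S × Fin 2 → K) :=
  (LinearMap.pi fun j : S × Fin 2 => leval (j.1 : K) ∘ₗ derivative ^ (j.2 : ℕ)) ∘ₗ
    (degreeLT K (2 * S.card)).subtype

theorem hermiteJets_surjective (S : Finset K) : Function.Surjective (hermiteJets S) := by
  refine (LinearMap.injective_iff_surjective_of_finrank_eq_finrank ?_).1 ?_
  · simp [(degreeLTEquiv K _).finrank_eq, Module.finrank_fintype_fun_eq_card, mul_comm]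
  rw [← LinearMap.ker_eq_bot, LinearMap.ker_eq_bot']
  intro p hp
  have hjet : ∀ y ∈ S, ∀ e : Fin 2, (derivative^[e] (p : K[X])).eval y = 0 := fun y hy e => by
    simpa [hermiteJets, Module.End.pow_apply] using congrFun hp (⟨y, hy⟩, e)
  exact Subtype.ext <|
    eq_zero_of_forall_isRoot_derivative p.2 fun y hy => ⟨hjet y hy 0, hjet y hy 1⟩

theorem exists_mem_degreeLT_iterate_derivative_eval (S : Finset K) (v : K → Fin 2 → K) :
    ∃ p ∈ degreeLT K (2 * S.card), ∀ y ∈ S, ∀ e : Fin 2, (derivative^[e] p).eval y = v y e := by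
  obtain ⟨p, hp⟩ := hermiteJets_surjective S fun j => v j.1 j.2
  refine ⟨p, p.2, fun y hy e => ?_⟩
  simpa [hermiteJets, Module.End.pow_apply] using congrFun hp (⟨y, hy⟩, e)

end Polynomial

theorem LinearMap.surjective_pi_of_isUnit_det {R M ι : Type*} [CommRing R] [AddCommGroup M]
    [Module R M] [Fintype ι] [DecidableEq ι] (φ : ι → M →ₗ[R] R) (v : ι → M)
    (h : IsUnit (Matrix.of fun r c => φ r (v c)).det) : Function.Surjective (LinearMap.pi φ) := by
  have hcomp : LinearMap.pi φ ∘ (fun z : ι → R => ∑ c, z c • v c)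
      = (Matrix.of fun r c => φ r (v c)).mulVec := by
    funext z r
    simp [Matrix.mulVec, dotProduct, mul_comm]
  refine Function.Surjective.of_comp (g := fun z : ι → R => ∑ c, z c • v c) ?_
  rw [hcomp]
  exact Matrix.mulVec_surjective_iff_isUnit.2 ((Matrix.isUnit_iff_isUnit_det _).2 h)

namespace MvPolynomial

theorem eval_polynomial_aeval_X {R σ : Type*} [CommSemiring R] (θ : σ → R) (j : σ)
    (A : Polynomial R) : eval θ (Polynomial.aeval (X j : MvPolynomial σ R) A) = A.eval (θ j) := by
  simpa using (Polynomial.aeval_algHom_apply (aeval θ) (X j) A).symm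

variable {K σ : Type*} [Field K] [Infinite K] [Fintype σ] [DecidableEq σ]

theorem exists_injective_eval_ne_zero {P : MvPolynomial σ K} (hP : P ≠ 0) :
    ∃ θ : σ → K, Function.Injective θ ∧ eval θ P ≠ 0 := by
  set D : MvPolynomial σ K := ∏ e ∈ Finset.univ.offDiag, (X e.1 - X e.2)
  have hD : D ≠ 0 := Finset.prod_ne_zero_iff.2 fun e he =>
    sub_ne_zero.2 fun h => (Finset.mem_offDiag.1 he).2.2 (X_injective h)
  obtain ⟨θ, hθ⟩ : ∃ θ : σ → K, eval θ (P * D) ≠ 0 := by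
    by_contra! h
    exact mul_ne_zero hP hD (funext fun θ => by simp [h θ])
  rw [map_mul] at hθ
  refine ⟨θ, fun i j hij => ?_, left_ne_zero_of_mul hθ⟩
  by_contra hne
  have hDθ := right_ne_zero_of_mul hθ
  rw [map_prod, Finset.prod_ne_zero_iff] at hDθ
  exact hDθ (i, j) (by simp [hne]) (by simp [hij])

theorem exists_injective_isUnit_det_map_eval {ι : Type*} [Fintype ι] [DecidableEq ι]
    (M : Matrix ι ι (MvPolynomial σ K)) (θ₀ : σ → K) (h₀ : IsUnit (M.map (eval θ₀)).det) :
    ∃ θ : σ → K, Function.Injective θ ∧ IsUnit (M.map (eval θ)).det := by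
  have hdet : ∀ θ, (M.map (eval θ)).det = eval θ M.det := fun θ => (RingHom.map_det _ M).symm
  rw [hdet] at h₀
  obtain ⟨θ, hθ, hne⟩ := exists_injective_eval_ne_zero (P := M.det) fun h => by simp [h] at h₀
  exact ⟨θ, hθ, by rw [hdet]; exact hne.isUnit⟩

end MvPolynomial

section ProductJets

variable {K : Type} [Field K]

open Polynomial

-- `deriv1 K d = ∂_t ^ tOrder d ∘ ∂_u ^ uOrder d`
def tOrder : Fin 3 → Fin 2 := ![0, 1, 0]

def uOrder : Fin 3 → Fin 2 := ![0, 0, 1]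

theorem eq_of_tOrder_eq_of_uOrder_eq :
    ∀ {d d' : Fin 3}, tOrder d = tOrder d' → uOrder d = uOrder d' → d = d' := by
  decide

theorem aeval_deriv1_aeval_mul_aeval (d : Fin 3) (A B : K[X]) (x y : K) :
    MvPolynomial.aeval ![x, y]
        (deriv1 K d (Polynomial.aeval (MvPolynomial.X 0) A * Polynomial.aeval (MvPolynomial.X 1) B))
      = (derivative^[tOrder d] A).eval x * (derivative^[uOrder d] B).eval y := by
  fin_cases d <;>
    simp [deriv1, tOrder, uOrder, Derivation.map_aeval, MvPolynomial.pderiv_X,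
      MvPolynomial.eval_polynomial_aeval_X, mul_comm]

noncomputable def productTuple (m ℓ a : ℕ) (A B : K[X]) : Fin (ℓ + 1) → MvPolynomial (Fin 2) K :=
  fun j => MvPolynomial.C (B.coeff (ℓ - j)) * A.homogenize (j * m + a)

theorem productTuple_mem_Vsub (m ℓ a : ℕ) (A B : K[X]) :
    productTuple m ℓ a A B ∈ Vsub K m ℓ a := by
  simp only [Vsub, Submodule.mem_iInf, Submodule.mem_comap]
  intro j
  have hdeg : (((j : ℕ) : ℤ) * m + a).toNat = j * m + a := by omega
  rw [if_neg (by omega), hdeg]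
  exact ⟨(isHomogeneous_homogenize A).C_mul _, trivial⟩

theorem chartPolyL_productTuple (m ℓ a : ℕ) {A B : K[X]} (hA : A.natDegree ≤ a)
    (hB : B.natDegree ≤ ℓ) :
    chartPolyL K ℓ (productTuple m ℓ a A B)
      = Polynomial.aeval (MvPolynomial.X 0) A * Polynomial.aeval (MvPolynomial.X 1) B := by
  have hterm : ∀ j : Fin (ℓ + 1),
      (MvPolynomial.aeval ![MvPolynomial.X 0, 1] :
          MvPolynomial (Fin 2) K →ₐ[K] MvPolynomial (Fin 2) K) (productTuple m ℓ a A B j)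
        = MvPolynomial.C (B.coeff (ℓ - j)) * Polynomial.aeval (MvPolynomial.X 0) A := fun j => by
    rw [productTuple, map_mul, MvPolynomial.aeval_C, aeval_homogenize_of_eq_one (by omega) _ rfl]
    rfl
  simp only [chartPolyL, LinearMap.sum_apply, LinearMap.comp_apply, LinearMap.proj_apply,
    AlgHom.toLinearMap_apply, LinearMap.mulLeft_apply]
  rw [aeval_eq_sum_range' (Nat.lt_succ_of_le hB), Finset.mul_sum,
    ← Finset.sum_range_reflect, ← Fin.sum_univ_eq_sum_range]
  refine Finset.sum_congr rfl fun j _ => ?_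
  rw [hterm, Nat.succ_sub_one, Algebra.smul_def, MvPolynomial.algebraMap_eq]
  ring

noncomputable def chartJet (m ℓ a : ℕ) (d : Fin 3) (x y : K) : Vsub K m ℓ (a : ℤ) →ₗ[K] K :=
  (MvPolynomial.aeval ![x, y] : MvPolynomial (Fin 2) K →ₐ[K] K).toLinearMap.comp
    ((deriv1 K d).comp ((chartPolyL K ℓ).comp (Vsub K m ℓ (a : ℤ)).subtype))

theorem chartJet_productTuple (m ℓ a : ℕ) {A B : K[X]} (hA : A.natDegree ≤ a)
    (hB : B.natDegree ≤ ℓ) (d : Fin 3) (x y : K) :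
    chartJet m ℓ a d x y ⟨productTuple m ℓ a A B, productTuple_mem_Vsub m ℓ a A B⟩
      = (derivative^[tOrder d] A).eval x * (derivative^[uOrder d] B).eval y := by
  simp only [chartJet, LinearMap.comp_apply, Submodule.subtype_apply, AlgHom.toLinearMap_apply,
    chartPolyL_productTuple m ℓ a hA hB, aeval_deriv1_aeval_mul_aeval]

open Classical in
theorem exists_dual_product_jets {ι : Type*} [Fintype ι] [DecidableEq ι] {x y : ι → K}
    (hxy : Function.Injective fun p => (x p, y p)) {NA NB : ℕ}
    (hNA : (Finset.univ.image x).card ≤ NA)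
    (hNB : ∀ p, (Finset.univ.filter fun q => x q = x p).card ≤ NB) :
    ∃ A B : ι × Fin 3 → K[X], (∀ c, A c ∈ degreeLT K (2 * NA)) ∧ (∀ c, B c ∈ degreeLT K (2 * NB)) ∧
      ∀ r c, (derivative^[tOrder r.2] (A c)).eval (x r.1) *
          (derivative^[uOrder r.2] (B c)).eval (y r.1) = if r = c then 1 else 0 := by
  set U : ι → Finset K := fun p => (Finset.univ.filter fun q => x q = x p).image y
  have hU : ∀ p, (U p).card ≤ NB := fun p => Finset.card_image_le.trans (hNB p)
  choose H hHdeg hHjet using fun (S : Finset K) (z : K) (e : Fin 2) =>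
    exists_mem_degreeLT_iterate_derivative_eval S
      fun (w : K) (e' : Fin 2) => if w = z ∧ e' = e then 1 else 0
  -- `A` is a Hermite basis polynomial in `t` for all the `t`-coordinates, and `B` one in `u`
  -- for the points on the same vertical line only.
  refine ⟨fun c => H (Finset.univ.image x) (x c.1) (tOrder c.2),
    fun c => H (U c.1) (y c.1) (uOrder c.2),
    fun c => degreeLT_mono (by omega) (hHdeg _ _ _),
    fun c => degreeLT_mono (by have := hU c.1; omega) (hHdeg _ _ _), ?_⟩
  rintro ⟨q, d'⟩ ⟨p, d⟩
  rw [hHjet _ _ _ _ (Finset.mem_image_of_mem x (Finset.mem_univ q))]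
  by_cases hx : x q = x p
  · rw [hHjet _ _ _ _ (Finset.mem_image_of_mem y (by simp [hx])), ite_zero_mul_ite_zero, one_mul]
    refine if_congr ⟨fun ⟨⟨_, ht⟩, hy, hu⟩ => ?_, fun h => ?_⟩ rfl rfl
    · exact Prod.ext (hxy (Prod.ext hx hy)) (eq_of_tOrder_eq_of_uOrder_eq ht hu)
    · simp_all
  · simp [hx, show (q, d') ≠ (p, d) from fun h => hx (by simp_all)]

theorem exists_injective_chartJet_surjective [Infinite K] {ι κ : Type*} [Fintype ι]
    [DecidableEq ι] [Fintype κ] [DecidableEq κ] (m ℓ a : ℕ) (w : ι → κ) {A B : ι × Fin 3 → K[X]}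
    (hA : ∀ c, A c ∈ degreeLT K (a + 1)) (hB : ∀ c, B c ∈ degreeLT K (ℓ + 1))
    {x₀ : ι → K} {y₀ : κ → K}
    (hkron : ∀ r c, (derivative^[tOrder r.2] (A c)).eval (x₀ r.1) *
      (derivative^[uOrder r.2] (B c)).eval (y₀ (w r.1)) = if r = c then 1 else 0) :
    ∃ (τ : ι → K) (c : κ → K), Function.Injective τ ∧ Function.Injective c ∧
      Function.Surjective
        (LinearMap.pi fun r : ι × Fin 3 => chartJet m ℓ a r.2 (τ r.1) (c (w r.1))) := by
  let M : Matrix (ι × Fin 3) (ι × Fin 3) (MvPolynomial (ι ⊕ κ) K) := Matrix.of fun r c =>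
    Polynomial.aeval (MvPolynomial.X (Sum.inl r.1)) (derivative^[tOrder r.2] (A c)) *
      Polynomial.aeval (MvPolynomial.X (Sum.inr (w r.1))) (derivative^[uOrder r.2] (B c))
  have hM : ∀ θ r c, MvPolynomial.eval θ (M r c) = (derivative^[tOrder r.2] (A c)).eval
      (θ (Sum.inl r.1)) * (derivative^[uOrder r.2] (B c)).eval (θ (Sum.inr (w r.1))) := by
    simp [M, MvPolynomial.eval_polynomial_aeval_X]
  have h₀ : M.map (MvPolynomial.eval (Sum.elim x₀ y₀)) = 1 := by
    ext r c
    rw [Matrix.map_apply, hM]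
    simpa [Matrix.one_apply] using hkron r c
  obtain ⟨θ, hθ, hdet⟩ := MvPolynomial.exists_injective_isUnit_det_map_eval M _
    (by rw [h₀, Matrix.det_one]; exact isUnit_one)
  refine ⟨θ ∘ Sum.inl, θ ∘ Sum.inr, hθ.comp Sum.inl_injective, hθ.comp Sum.inr_injective,
    LinearMap.surjective_pi_of_isUnit_det _
      (fun c => ⟨productTuple m ℓ a (A c) (B c), productTuple_mem_Vsub m ℓ a (A c) (B c)⟩) ?_⟩
  convert hdet using 2
  ext r c
  simp [chartJet_productTuple m ℓ a (natDegree_le_of_mem_degreeLT (hA c))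
    (natDegree_le_of_mem_degreeLT (hB c)), hM]

end ProductJets

section Configuration

variable {u : ℕ} {s : Fin u → ℕ}

def blockPos (n : ℕ) (p : (i : Fin u) × Fin (s i)) : ℕ × ℕ := ((p.1 : ℕ) / n, p.2)

theorem card_image_blockPos_le {n s₁ : ℕ} (hs : ∀ i, s i ≤ s₁) :
    (Finset.univ.image (blockPos (s := s) n)).card ≤ ((u - 1) / n + 1) * s₁ := by
  calc (Finset.univ.image (blockPos (s := s) n)).card
      ≤ (Finset.range ((u - 1) / n + 1) ×ˢ Finset.range s₁).card := by
        refine Finset.card_le_card fun b hb => ?_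
        obtain ⟨p, -, rfl⟩ := Finset.mem_image.1 hb
        have := p.2.isLt.trans_le (hs p.1)
        simp only [blockPos, Finset.mem_product, Finset.mem_range]
        exact ⟨Nat.lt_succ_of_le (Nat.div_le_div_right (by omega)), this⟩
    _ = ((u - 1) / n + 1) * s₁ := by simp

theorem card_filter_blockPos_eq_le {n : ℕ} (hn : 0 < n) (p : (i : Fin u) × Fin (s i)) :
    (Finset.univ.filter fun q : (i : Fin u) × Fin (s i) => blockPos n q = blockPos n p).card
      ≤ n := by
  calc _ ≤ (Finset.range n).card := by
        refine Finset.card_le_card_of_injOn (fun q => (q.1 : ℕ) % n)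
          (fun q _ => Finset.mem_range.2 (Nat.mod_lt _ hn)) fun q hq q' hq' hmod => ?_
        simp only [Finset.coe_filter, Finset.mem_univ, true_and, Set.mem_ofPred_eq, blockPos,
          Prod.mk.injEq] at hq hq' hmod
        have h1 : q.1 = q'.1 := Fin.ext <| by
          rw [← Nat.div_add_mod q.1 n, ← Nat.div_add_mod q'.1 n, hq.1, hq'.1, hmod]
        exact Sigma.ext h1 ((Fin.heq_ext_iff (congrArg s h1)).2 (hq.2.trans hq'.2.symm))
    _ = n := Finset.card_range n

open Classical in
theorem exists_blocked_configuration {K : Type*} [AddMonoidWithOne K] [CharZero K] {n s₁ : ℕ} (hn : 0 < n)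
    (hs : ∀ i, s i ≤ s₁) :
    ∃ (x : ((i : Fin u) × Fin (s i)) → K) (y : Fin u → K),
      Function.Injective (fun p => (x p, y p.1)) ∧
      (Finset.univ.image x).card ≤ ((u - 1) / n + 1) * s₁ ∧
      ∀ p, (Finset.univ.filter fun q => x q = x p).card ≤ n := by
  set e : ℕ × ℕ → K := fun b => ((Nat.pairEquiv b : ℕ) : K)
  have he : Function.Injective e := Nat.cast_injective.comp Nat.pairEquiv.injective
  refine ⟨e ∘ blockPos n, fun i => ((i : ℕ) : K), fun p q hpq => ?_, ?_, fun p => ?_⟩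
  · simp only [Prod.mk.injEq, Function.comp_apply] at hpq
    have h1 : p.1 = q.1 := Fin.ext (Nat.cast_injective hpq.2)
    have h2 := congrArg Prod.snd (he hpq.1)
    exact Sigma.ext h1 ((Fin.heq_ext_iff (congrArg s h1)).2 h2)
  · rw [← Finset.image_image]
    exact Finset.card_image_le.trans (card_image_blockPos_le hs)
  · simpa only [Function.comp_apply, he.eq_iff] using card_filter_blockPos_eq_le hn p

end Configuration

theorem Nat.sub_one_div_half_le_ceil_div {u k : ℕ} (hk : 0 < k) :
    (u - 1) / ((k + 1) / 2) ≤ (2 * u + k - 1) / k := by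
  have hq : 2 * u ≤ k * ((2 * u + k - 1) / k) := by
    have h₁ := Nat.div_add_mod (2 * u + k - 1) k
    have h₂ := Nat.mod_lt (2 * u + k - 1) hk
    generalize k * ((2 * u + k - 1) / k) = c at h₁ ⊢
    omega
  generalize (2 * u + k - 1) / k = q at hq ⊢
  have : k * q ≤ 2 * ((k + 1) / 2) * q := Nat.mul_le_mul_right q (by omega)
  exact Nat.div_le_of_le_mul (by rw [mul_assoc] at this; omega)

theorem statement12_general (K : Type) [Field K] [CharZero K]
    (m u : ℕ) (hu : 0 < u) (k : ℕ) (hk : 5 ≤ k)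
    (s : Fin u → ℕ)
    (hmono : ∀ i j : Fin u, i ≤ j → s j ≤ s i)
    (ℓ a : ℕ) (hℓ : k ≤ ℓ)
    (ha : 2 * ((2 * u + k - 1) / k + 1) * s ⟨0, hu⟩ ≤ a) :
    ∃ (h : Fin u → MvPolynomial (Fin 2) K) (τ : (i : Fin u) → Fin (s i) → K),
      (∀ i, (h i).IsHomogeneous m) ∧
      (∀ i j, i ≠ j → h i ≠ h j) ∧
      (∀ (i : Fin u) (t : Fin (s i)) (j : Fin u) (r : Fin (s j)),
        (⟨i, t⟩ : (i : Fin u) × Fin (s i)) ≠ ⟨j, r⟩ → τ i t ≠ τ j r) ∧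
      Function.Surjective
        (LinearMap.pi fun idx : ((i : Fin u) × Fin (s i)) × Fin 3 =>
          ((aeval ![τ idx.1.1 idx.1.2, eval ![τ idx.1.1 idx.1.2, 1] (h idx.1.1)] :
              MvPolynomial (Fin 2) K →ₐ[K] K).toLinearMap.comp
            ((deriv1 K idx.2).comp
              ((chartPolyL K ℓ).comp (Vsub K m ℓ (a : ℤ)).subtype)))) := by
  have hsle : ∀ i, s i ≤ s ⟨0, hu⟩ := fun i => hmono _ i (Nat.zero_le i.val)
  have hblocks := Nat.sub_one_div_half_le_ceil_div (u := u) (k := k) (by omega)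
  obtain ⟨x₀, y₀, hxy, hNA, hNB⟩ :=
    exists_blocked_configuration (K := K) (n := (k + 1) / 2) (by omega) hsle
  obtain ⟨A, B, hA, hB, hkron⟩ := exists_dual_product_jets hxy hNA hNB
  have hAdeg : 2 * (((u - 1) / ((k + 1) / 2) + 1) * s ⟨0, hu⟩) ≤ a + 1 := by
    have := Nat.mul_le_mul_right (s ⟨0, hu⟩) (Nat.add_le_add_right hblocks 1)
    rw [mul_assoc] at ha
    omega
  obtain ⟨τ, c, hτ, hc, hsurj⟩ := exists_injective_chartJet_surjective m ℓ a Sigma.fst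
    (fun c => Polynomial.degreeLT_mono hAdeg (hA c))
    (fun c => Polynomial.degreeLT_mono (by omega) (hB c)) hkron
  have heval : ∀ (x : K) i, eval ![x, 1] (C (c i) * X 1 ^ m) = c i := by simp
  refine ⟨fun i => C (c i) * X 1 ^ m, fun i t => τ ⟨i, t⟩,
    fun i => (isHomogeneous_X_pow _ _).C_mul _, fun i j hij h => hij (hc ?_),
    fun i t j r hne h => hne (hτ h), ?_⟩
  · simpa using congrArg (eval ![0, 1]) h
  · simpa only [heval, chartJet] using hsurj

/-- Lemma 5.5 of the paper: being singular at the δ = Σ s_i chosen points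
(s_i points on each of u general sections) imposes 3δ independent conditions on
|O(ℓ,a)|, i.e. h^1(I_(S^(1))(ℓ,a)) = 0.  Index i : Fin u plays the role of the paper's
index i+1, so s ⟨0,_⟩ is the paper's s_1. -/
theorem statement12 (K : Type) [Field K] [IsAlgClosed K] [CharZero K]
    (m u : ℕ) (hu : 0 < u) (k : ℕ) (hk : 5 ≤ k)
    (s : Fin u → ℕ)
    (hmono : ∀ i j : Fin u, i ≤ j → s j ≤ s i)
    (hpos : ∀ i, 1 ≤ s i)
    (ℓ a : ℕ) (hℓ : k ≤ ℓ)
    (ha : 2 * ((2 * u + k - 1) / k + 1) * s ⟨0, hu⟩ ≤ a) :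
    ∃ (h : Fin u → MvPolynomial (Fin 2) K) (τ : (i : Fin u) → Fin (s i) → K),
      (∀ i, (h i).IsHomogeneous m) ∧
      (∀ i j, i ≠ j → h i ≠ h j) ∧
      (∀ (i : Fin u) (t : Fin (s i)) (j : Fin u) (r : Fin (s j)),
        (⟨i, t⟩ : (i : Fin u) × Fin (s i)) ≠ ⟨j, r⟩ → τ i t ≠ τ j r) ∧
      Function.Surjective
        (LinearMap.pi fun idx : ((i : Fin u) × Fin (s i)) × Fin 3 =>
          ((aeval ![τ idx.1.1 idx.1.2, eval ![τ idx.1.1 idx.1.2, 1] (h idx.1.1)] :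
              MvPolynomial (Fin 2) K →ₐ[K] K).toLinearMap.comp
            ((deriv1 K idx.2).comp
              ((chartPolyL K ℓ).comp (Vsub K m ℓ (a : ℤ)).subtype)))) :=
  statement12_general K m u hu k hk s hmono ℓ a hℓ ha
end
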